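/- (Theorem 1, full additive form.) Let Y ∈ L²(P), p ∈ ℕ, λ ≥ 0, and for each j ∈ {1, …, p} let m₁ⱼ ≤ m₂ⱼ be sub-σ-algebras of 𝒢. Suppose (g₁*, …, g_p*) with each g_j* ∈ K(m₁ⱼ, m₂ⱼ) minimizes the penalized squared-error objective F(g₁, …, g_p) := ‖Y − Σⱼ gⱼ‖₂² + 2λ Σⱼ ‖gⱼ‖₂ over the product set ∏ⱼ K(m₁ⱼ, m₂ⱼ). Then for every j, g_j* = S_λ(f_j) = (1 − λ/‖f_j‖₂)₊ · f_j a.e., where R_j := Y − Σ_{j' ≠ j} g_{j'}* is the j-th partial residual and f_j := E[R_j | m₂ⱼ] − E[R_j | m₁ⱼ]. -/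

import Mathlib

open MeasureTheory

/-!
Fixing every block but the `j`-th, the objective becomes `‖R_j - g‖² + 2λ‖g‖` plus a constant.
By the pull-out property of conditional expectation, `f_j = E[R_j | m₂ⱼ] - E[R_j | m₁ⱼ]` lies in
`K(m₁ⱼ, m₂ⱼ)` and `R_j - f_j` is orthogonal to it, so on `K(m₁ⱼ, m₂ⱼ)` Pythagoras turns the block
objective into `‖f_j - g‖² + 2λ‖g‖` plus a constant. This function is `2`-strongly convex with
minimizer `S_λ(f_j)`, so it exceeds its minimum by at least `‖g - S_λ(f_j)‖²`; comparing `g_j*`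
with the competitor obtained by replacing its `j`-th block by `S_λ(f_j)` forces `g_j* = S_λ(f_j)`
in `L²`.
-/

/-- `K(m₁, m₂)`: the set of `g ∈ L²(P)` that are a.e. equal to an `m₂`-measurable function
and satisfy `E[g | m₁] = 0` a.e. -/
def memK {Ω : Type*} {𝒢 : MeasurableSpace Ω} (m₁ m₂ : MeasurableSpace Ω)
    (P : Measure[𝒢] Ω) (g : Ω → ℝ) : Prop :=
  MemLp g 2 P ∧ AEStronglyMeasurable[m₂] g P ∧ P[g|m₁] =ᵐ[P] 0

/-- The `L²(P)` norm of a real-valued function. -/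
noncomputable def l2norm {Ω : Type*} {𝒢 : MeasurableSpace Ω} (P : Measure[𝒢] Ω)
    (h : Ω → ℝ) : ℝ :=
  (eLpNorm h 2 P).toReal

noncomputable def softThreshold {E : Type*} [NormedAddCommGroup E] [NormedSpace ℝ E]
    (lam : ℝ) (f : E) : E :=
  max (1 - lam / ‖f‖) 0 • f

section SoftThreshold

variable {E : Type*} [NormedAddCommGroup E] [InnerProductSpace ℝ E] {lam : ℝ}

lemma softThreshold_of_norm_le {f : E} (hf : ‖f‖ ≤ lam) : softThreshold lam f = 0 := by
  rcases (norm_nonneg f).eq_or_lt with h0 | hpos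
  · simp [softThreshold, norm_eq_zero.mp h0.symm]
  · have : 1 ≤ lam / ‖f‖ := (one_le_div hpos).mpr hf
    simp [softThreshold, max_eq_right (sub_nonpos.mpr this)]

lemma softThreshold_of_lt_norm {f : E} (hf : lam < ‖f‖) (hlam : 0 ≤ lam) :
    softThreshold lam f = (1 - lam / ‖f‖) • f := by
  have hpos : 0 < ‖f‖ := hlam.trans_lt hf
  have : lam / ‖f‖ ≤ 1 := (div_le_one hpos).mpr hf.le
  rw [softThreshold, max_eq_left (sub_nonneg.mpr this)]

lemma objective_softThreshold_add_sq_le (hlam : 0 ≤ lam) (f x : E) :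
    ‖f - softThreshold lam f‖ ^ 2 + 2 * lam * ‖softThreshold lam f‖
      + ‖x - softThreshold lam f‖ ^ 2 ≤ ‖f - x‖ ^ 2 + 2 * lam * ‖x‖ := by
  have hcs := real_inner_le_norm f x
  rcases le_or_gt ‖f‖ lam with hf | hf
  · simp only [softThreshold_of_norm_le hf, sub_zero, norm_zero, mul_zero, add_zero]
    rw [norm_sub_sq_real]
    nlinarith [norm_nonneg x]
  · have hpos : 0 < ‖f‖ := hlam.trans_lt hf
    set c := 1 - lam / ‖f‖ with hc
    have hcN : c * ‖f‖ = ‖f‖ - lam := by rw [hc]; field_simp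
    rw [softThreshold_of_lt_norm hf hlam, norm_sub_sq_real, norm_sub_sq_real, norm_sub_sq_real,
      inner_smul_right, inner_smul_right, norm_smul, real_inner_self_eq_norm_sq,
      real_inner_comm, Real.norm_eq_abs, abs_of_nonneg (by nlinarith : 0 ≤ c)]
    have : lam / ‖f‖ * inner ℝ f x ≤ lam / ‖f‖ * (‖f‖ * ‖x‖) :=
      mul_le_mul_of_nonneg_left hcs (div_nonneg hlam hpos.le)
    have hcancel : lam / ‖f‖ * (‖f‖ * ‖x‖) = lam * ‖x‖ := by field_simp
    nlinarith

lemma eq_softThreshold_of_objective_le (hlam : 0 ≤ lam) {f x : E}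
    (h : ‖f - x‖ ^ 2 + 2 * lam * ‖x‖
      ≤ ‖f - softThreshold lam f‖ ^ 2 + 2 * lam * ‖softThreshold lam f‖) :
    x = softThreshold lam f := by
  have := objective_softThreshold_add_sq_le hlam f x
  rw [← sub_eq_zero, ← norm_eq_zero, ← sq_eq_zero_iff]
  nlinarith [sq_nonneg ‖x - softThreshold lam f‖]

lemma eq_softThreshold_of_inner_eq_zero (hlam : 0 ≤ lam) {r f x : E}
    (hf : inner ℝ (r - f) f = 0) (hx : inner ℝ (r - f) x = 0)
    (h : ‖r - x‖ ^ 2 + 2 * lam * ‖x‖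
      ≤ ‖r - softThreshold lam f‖ ^ 2 + 2 * lam * ‖softThreshold lam f‖) :
    x = softThreshold lam f := by
  have pythagoras : ∀ y, inner ℝ (r - f) y = 0 → ‖r - y‖ ^ 2 = ‖r - f‖ ^ 2 + ‖f - y‖ ^ 2 :=
    fun y hy => by
      have hperp : inner ℝ (r - f) (f - y) = 0 := by rw [inner_sub_right, hf, hy, sub_zero]
      rw [← sub_add_sub_cancel r f y, norm_add_sq_real, hperp]
      ring
  have hS : inner ℝ (r - f) (softThreshold lam f) = 0 := by
    rw [softThreshold, inner_smul_right, hf, mul_zero]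
  apply eq_softThreshold_of_objective_le hlam
  rw [pythagoras x hx, pythagoras _ hS] at h
  linarith

end SoftThreshold

section L2

variable {Ω : Type*} {𝒢 : MeasurableSpace Ω} {P : Measure Ω}

lemma inner_toLp_eq_integral_mul {f g : Ω → ℝ} (hf : MemLp f 2 P) (hg : MemLp g 2 P) :
    inner ℝ (hf.toLp f) (hg.toLp g) = ∫ ω, f ω * g ω ∂P := by
  rw [L2.inner_def]
  refine integral_congr_ae ?_
  filter_upwards [hf.coeFn_toLp, hg.coeFn_toLp] with ω hfω hgω
  simp [hfω, hgω, mul_comm]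

lemma integral_mul_condExp_of_aestronglyMeasurable {m : MeasurableSpace Ω} (hm : m ≤ 𝒢)
    [SigmaFinite (P.trim hm)] {f g : Ω → ℝ} (hf : AEStronglyMeasurable[m] f P)
    (hfg : Integrable (f * g) P) (hg : Integrable g P) :
    ∫ ω, f ω * (P[g|m]) ω ∂P = ∫ ω, f ω * g ω ∂P :=
  calc ∫ ω, f ω * (P[g|m]) ω ∂P = ∫ ω, (P[f * g|m]) ω ∂P :=
        integral_congr_ae (condExp_mul_of_aestronglyMeasurable_left hf hfg hg).symm
    _ = ∫ ω, f ω * g ω ∂P := integral_condExp hm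

lemma memK.const_smul {m₁ m₂ : MeasurableSpace Ω} {g : Ω → ℝ} (hg : memK m₁ m₂ P g) (c : ℝ) :
    memK m₁ m₂ P (c • g) := by
  obtain ⟨hgL2, hgm, hgc⟩ := hg
  refine ⟨hgL2.const_smul c, hgm.const_smul c, ?_⟩
  filter_upwards [condExp_smul (m := m₁) c g, hgc] with ω h₁ h₂
  simp [h₁, h₂]

lemma ae_eq_softThreshold_of_integral_mul_eq_zero {lam : ℝ} (hlam : 0 ≤ lam) {R f g : Ω → ℝ}
    (hR : MemLp R 2 P) (hf : MemLp f 2 P) (hg : MemLp g 2 P)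
    (hf_perp : ∫ ω, (R - f) ω * f ω ∂P = 0) (hg_perp : ∫ ω, (R - f) ω * g ω ∂P = 0)
    (hle : l2norm P (R - g) ^ 2 + 2 * lam * l2norm P g
      ≤ l2norm P (R - max (1 - lam / l2norm P f) 0 • f) ^ 2
        + 2 * lam * l2norm P (max (1 - lam / l2norm P f) 0 • f)) :
    g =ᵐ[P] max (1 - lam / l2norm P f) 0 • f := by
  set c := max (1 - lam / l2norm P f) 0
  have hnorm {h : Ω → ℝ} (hh : MemLp h 2 P) : l2norm P h = ‖hh.toLp h‖ :=
    (Lp.norm_toLp h hh).symm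
  have hS : softThreshold lam (hf.toLp f) = (hf.const_smul c).toLp (c • f) := by
    rw [softThreshold, ← hnorm hf, MemLp.toLp_const_smul]
  refine (MemLp.toLp_eq_toLp_iff hg (hf.const_smul c)).mp ?_
  rw [← hS]
  refine eq_softThreshold_of_inner_eq_zero hlam (r := hR.toLp R) ?_ ?_ ?_
  · rw [← MemLp.toLp_sub, inner_toLp_eq_integral_mul, hf_perp]
  · rw [← MemLp.toLp_sub, inner_toLp_eq_integral_mul, hg_perp]
  · rwa [hS, ← MemLp.toLp_sub, ← MemLp.toLp_sub, ← hnorm, ← hnorm, ← hnorm, ← hnorm]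

variable [IsFiniteMeasure P] {m₁ m₂ : MeasurableSpace Ω}

lemma memK_condExp_sub_condExp (h12 : m₁ ≤ m₂) (h2 : m₂ ≤ 𝒢) {R : Ω → ℝ} (hR : MemLp R 2 P) :
    memK m₁ m₂ P (P[R|m₂] - P[R|m₁]) := by
  refine ⟨(hR.condExp one_le_two).sub (hR.condExp one_le_two),
    stronglyMeasurable_condExp.aestronglyMeasurable.sub
      (stronglyMeasurable_condExp.mono h12).aestronglyMeasurable, ?_⟩
  filter_upwards [condExp_sub (integrable_condExp (m := m₂) (f := R)) integrable_condExp m₁,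
    condExp_condExp_of_le (f := R) h12 h2] with ω hsub htower
  rw [hsub, Pi.sub_apply, htower,
    condExp_of_stronglyMeasurable (h12.trans h2) stronglyMeasurable_condExp integrable_condExp,
    Pi.zero_apply, sub_self]

lemma integral_sub_condExp_sub_condExp_mul_eq_zero (h12 : m₁ ≤ m₂) (h2 : m₂ ≤ 𝒢)
    {R g : Ω → ℝ} (hR : MemLp R 2 P) (hg : memK m₁ m₂ P g) :
    ∫ ω, (R - (P[R|m₂] - P[R|m₁])) ω * g ω ∂P = 0 := by
  obtain ⟨hgL2, hgm, hgc⟩ := hg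
  have hR₁ := hR.condExp (m := m₁) one_le_two
  have hR₂ := hR.condExp (m := m₂) one_le_two
  have hg₁ : ∫ ω, (P[R|m₁]) ω * g ω ∂P = 0 := by
    rw [← integral_mul_condExp_of_aestronglyMeasurable (h12.trans h2)
      stronglyMeasurable_condExp.aestronglyMeasurable (hR₁.integrable_mul hgL2)
      (hgL2.integrable one_le_two)]
    exact integral_eq_zero_of_ae (hgc.mono fun ω h => by simp [h])
  have hg₂ : ∫ ω, (P[R|m₂]) ω * g ω ∂P = ∫ ω, R ω * g ω ∂P := by
    simpa only [mul_comm (g _)] using integral_mul_condExp_of_aestronglyMeasurable h2 hgm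
      (hgL2.integrable_mul hR) (hR.integrable one_le_two)
  have hRg : Integrable (fun ω => R ω * g ω) P := hR.integrable_mul hgL2
  have hR₁g : Integrable (fun ω => (P[R|m₁]) ω * g ω) P := hR₁.integrable_mul hgL2
  have hR₂g : Integrable (fun ω => (P[R|m₂]) ω * g ω) P := hR₂.integrable_mul hgL2
  have hdiff : Integrable (fun ω => (P[R|m₂]) ω * g ω - (P[R|m₁]) ω * g ω) P := hR₂g.sub hR₁g
  simp only [Pi.sub_apply, sub_mul]
  rw [integral_sub hRg hdiff, integral_sub hR₂g hR₁g, hg₁, hg₂, sub_zero, sub_self]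

end L2

lemma block_objective_le_of_objective_le_update {α ι : Type*} [Fintype ι] [DecidableEq ι]
    (N : (α → ℝ) → ℝ) (lam : ℝ) (Y : α → ℝ) (g : ι → α → ℝ) (j : ι) (c : α → ℝ)
    (h : N (fun ω => Y ω - ∑ i, g i ω) ^ 2 + 2 * lam * ∑ i, N (g i)
      ≤ N (fun ω => Y ω - ∑ i, Function.update g j c i ω) ^ 2
        + 2 * lam * ∑ i, N (Function.update g j c i)) :
    N ((fun ω => Y ω - ∑ i ∈ Finset.univ.erase j, g i ω) - g j) ^ 2 + 2 * lam * N (g j)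
      ≤ N ((fun ω => Y ω - ∑ i ∈ Finset.univ.erase j, g i ω) - c) ^ 2 + 2 * lam * N c := by
  have hsplit (F : ι → ℝ) : ∑ i, F i = F j + ∑ i ∈ Finset.univ.erase j, F i :=
    (Finset.add_sum_erase _ F (Finset.mem_univ j)).symm
  have hres (g' : ι → α → ℝ) : (fun ω => Y ω - ∑ i, g' i ω)
      = (fun ω => Y ω - ∑ i ∈ Finset.univ.erase j, g' i ω) - g' j := by
    funext ω
    rw [Pi.sub_apply, hsplit]
    ring
  have herase (F : (α → ℝ) → ℝ) :
      ∑ i ∈ Finset.univ.erase j, F (Function.update g j c i)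
        = ∑ i ∈ Finset.univ.erase j, F (g i) :=
    Finset.sum_congr rfl fun i hi => by rw [Function.update_of_ne (Finset.ne_of_mem_erase hi)]
  have herase_apply (ω : α) := herase fun h => h ω
  rw [hres, hres, hsplit, hsplit, Function.update_self, herase N] at h
  simp only [herase_apply] at h
  linarith

/-- Theorem 1 (full additive form): if `(g₁*, …, g_p*)`, with `g_j* ∈ K(m₁ⱼ, m₂ⱼ)`, minimizes
`F(g₁, …, g_p) = ‖Y − Σⱼ gⱼ‖₂² + 2λ Σⱼ ‖gⱼ‖₂` over `∏ⱼ K(m₁ⱼ, m₂ⱼ)`, then for every `j`,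
`g_j* = S_λ(f_j) = (1 − λ/‖f_j‖₂)₊ · f_j` a.e., where `R_j := Y − Σ_{j' ≠ j} g_{j'}*` is the
`j`-th partial residual and `f_j := E[R_j | m₂ⱼ] − E[R_j | m₁ⱼ]`. -/
theorem sparse_additive_minimizer_is_soft_thresholded {Ω : Type*} {𝒢 : MeasurableSpace Ω}
    (P : Measure Ω) [IsProbabilityMeasure P] (p : ℕ)
    (m₁ m₂ : Fin p → MeasurableSpace Ω)
    (h12 : ∀ j, m₁ j ≤ m₂ j) (h2 : ∀ j, m₂ j ≤ 𝒢)
    (Y : Ω → ℝ) (hY : MemLp Y 2 P) (lam : ℝ) (hlam : 0 ≤ lam)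
    (gStar : Fin p → Ω → ℝ) (hgStar : ∀ j, memK (m₁ j) (m₂ j) P (gStar j))
    (hmin : ∀ g : Fin p → Ω → ℝ, (∀ j, memK (m₁ j) (m₂ j) P (g j)) →
      l2norm P (fun ω => Y ω - ∑ j, gStar j ω) ^ 2 + 2 * lam * ∑ j, l2norm P (gStar j) ≤
        l2norm P (fun ω => Y ω - ∑ j, g j ω) ^ 2 + 2 * lam * ∑ j, l2norm P (g j)) :
    ∀ j : Fin p,
      let Rj : Ω → ℝ := fun ω => Y ω - ∑ j' ∈ Finset.univ.erase j, gStar j' ω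
      let fj : Ω → ℝ := fun ω => (P[Rj|m₂ j]) ω - (P[Rj|m₁ j]) ω
      gStar j =ᵐ[P] fun ω => max (1 - lam / l2norm P fj) 0 * fj ω := by
  intro j R f
  have hR : MemLp R 2 P := hY.sub (memLp_finsetSum _ fun i _ => (hgStar i).1)
  have hf : memK (m₁ j) (m₂ j) P f := memK_condExp_sub_condExp (h12 j) (h2 j) hR
  have hupdate : ∀ i, memK (m₁ i) (m₂ i) P
      (Function.update gStar j (max (1 - lam / l2norm P f) 0 • f) i) :=
    Function.forall_update_iff _ (fun i g => memK (m₁ i) (m₂ i) P g) |>.mpr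
      ⟨hf.const_smul _, fun i _ => hgStar i⟩
  exact ae_eq_softThreshold_of_integral_mul_eq_zero hlam hR hf.1 (hgStar j).1
    (integral_sub_condExp_sub_condExp_mul_eq_zero (h12 j) (h2 j) hR hf)
    (integral_sub_condExp_sub_condExp_mul_eq_zero (h12 j) (h2 j) hR (hgStar j))
    (block_objective_le_of_objective_le_update _ _ _ _ _ _ (hmin _ hupdate))
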